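/- Every intersection graph of n subcubes of {0,1}^2 with n ≥ 3(k−1)+1 contains either a clique of size k or an independent set of size 4; hence R_2(k,4) = 3(k−1)+1. -/

import Mathlib

/-- The subcube of `{0,1}^d` represented by `u ∈ {0,1,*}^d` (`none` = `*`). -/
def cubeSet {d : ℕ} (u : Fin d → Option Bool) : Set (Fin d → Bool) :=
  {x | ∀ i : Fin d, ∀ b : Bool, u i = some b → x i = b}

/-- The intersection graph of a family of subcubes contains a clique of size `k`. -/
def cubesHaveClique {d n : ℕ} (A : Fin n → (Fin d → Option Bool)) (k : ℕ) : Prop :=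
  ∃ s : Finset (Fin n), s.card = k ∧
    ∀ i ∈ s, ∀ j ∈ s, i ≠ j → (cubeSet (A i) ∩ cubeSet (A j)).Nonempty

/-- The intersection graph of a family of subcubes contains an independent set of size `l`. -/
def cubesHaveIndep {d n : ℕ} (A : Fin n → (Fin d → Option Bool)) (l : ℕ) : Prop :=
  ∃ s : Finset (Fin n), s.card = l ∧
    ∀ i ∈ s, ∀ j ∈ s, i ≠ j → cubeSet (A i) ∩ cubeSet (A j) = ∅

/-- `Rd d k l`: the least `n` such that every intersection graph of `n` subcubes of
`{0,1}^d` contains a clique of size `k` or an independent set of size `l`. -/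
noncomputable def Rd (d k l : ℕ) : ℕ :=
  sInf {n : ℕ | ∀ A : Fin n → (Fin d → Option Bool),
    cubesHaveClique A k ∨ cubesHaveIndep A l}


/-!
Upper bound: if every point of `{0,1}^d` occurs as a singleton cube of the family, these
`2^d` singletons are pairwise disjoint. Otherwise some point `p₀` is not a singleton of the
family, so every cube contains a point other than `p₀`; by pigeonhole over the remaining
`2^d - 1` points, more than `(2^d - 1)(k - 1)` cubes force `k` of them through a common point.

Lower bound: `k - 1` copies of each of `2^d - 1` distinct singletons.
-/

open Finset

variable {d : ℕ}

def pointCube (p : Fin d → Bool) : Fin d → Option Bool := fun i => some (p i)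

lemma cubeSet_pointCube (p : Fin d → Bool) : cubeSet (pointCube p) = {p} := by
  ext x
  refine ⟨fun hx => funext fun i => hx i (p i) rfl, ?_⟩
  rintro rfl i b hb
  exact Option.some.inj hb

lemma cubeSet_nonempty (u : Fin d → Option Bool) : (cubeSet u).Nonempty :=
  ⟨fun i => (u i).getD false, fun i b hb => by simp [hb]⟩

section UpperBound

variable {n : ℕ} (A : Fin n → Fin d → Option Bool)

lemma cubesHaveIndep_of_forall_singleton (h : ∀ p, ∃ i, cubeSet (A i) = {p}) :
    cubesHaveIndep A (2 ^ d) := by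
  choose g hg using h
  have hg_inj : Function.Injective g := fun p q hpq =>
    Set.singleton_injective (by rw [← hg p, ← hg q, hpq])
  refine ⟨univ.image g, by simp [card_image_of_injective _ hg_inj], ?_⟩
  simp only [mem_image, mem_univ, true_and]
  rintro _ ⟨p, rfl⟩ _ ⟨q, rfl⟩ hne
  rw [hg p, hg q, Set.singleton_inter_eq_empty, Set.mem_singleton_iff]
  exact fun hpq => hne (congrArg g hpq)

lemma cubesHaveClique_of_le_card_fiber {k : ℕ} (f : Fin n → Fin d → Bool)
    (hf : ∀ i, f i ∈ cubeSet (A i)) (p : Fin d → Bool) (hp : k ≤ #{i | f i = p}) :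
    cubesHaveClique A k := by
  obtain ⟨s, hs, rfl⟩ := exists_subset_card_eq hp
  refine ⟨s, rfl, fun i hi j hj _ => ⟨p, ?_, ?_⟩⟩
  · simpa [(mem_filter.mp (hs hi)).2] using hf i
  · simpa [(mem_filter.mp (hs hj)).2] using hf j

theorem cubesHaveClique_or_cubesHaveIndep {k : ℕ} (hn : (2 ^ d - 1) * (k - 1) < n) :
    cubesHaveClique A k ∨ cubesHaveIndep A (2 ^ d) := by
  by_cases h : ∀ p, ∃ i, cubeSet (A i) = {p}
  · exact Or.inr (cubesHaveIndep_of_forall_singleton A h)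
  push Not at h
  obtain ⟨p₀, hp₀⟩ := h
  have h_avoid : ∀ i, ∃ x ∈ cubeSet (A i), x ≠ p₀ := by
    intro i
    by_contra! hc
    exact hp₀ i (Set.eq_singleton_iff_nonempty_unique_mem.mpr ⟨cubeSet_nonempty _, hc⟩)
  choose f hf hf_ne using h_avoid
  have h_card : #(univ.erase p₀) * (k - 1) < #(univ : Finset (Fin n)) := by
    simpa [card_erase_of_mem] using hn
  obtain ⟨p, -, hp⟩ := exists_lt_card_fiber_of_mul_lt_card_of_maps_to
    (fun i _ => mem_erase.mpr ⟨hf_ne i, mem_univ _⟩) h_card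
  exact Or.inl (cubesHaveClique_of_le_card_fiber A f hf p (by omega))

end UpperBound

section LowerBound

variable {m : ℕ} (g : Fin m → Fin d → Bool)

lemma not_cubesHaveClique_pointCube {k : ℕ} (hk : 1 ≤ k) (hg : ∀ p, #{i | g i = p} < k) :
    ¬ cubesHaveClique (pointCube ∘ g) k := by
  rintro ⟨s, hs, hclique⟩
  obtain ⟨i₀, hi₀⟩ := card_pos.mp (by omega : 0 < #s)
  have h_fiber : s ⊆ ({i | g i = g i₀} : Finset (Fin m)) := by
    intro i hi
    rw [mem_filter]
    refine ⟨mem_univ _, ?_⟩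
    by_cases hii : i = i₀
    · rw [hii]
    obtain ⟨x, hxi, hxi₀⟩ := hclique i hi i₀ hi₀ hii
    simp only [Function.comp_apply, cubeSet_pointCube, Set.mem_singleton_iff] at hxi hxi₀
    rw [← hxi, hxi₀]
  have := card_le_card h_fiber
  have := hg (g i₀)
  omega

lemma not_cubesHaveIndep_pointCube {l : ℕ} (hg : #(univ.image g) < l) :
    ¬ cubesHaveIndep (pointCube ∘ g) l := by
  rintro ⟨s, rfl, hindep⟩
  obtain ⟨i, hi, j, hj, hij, hgij⟩ := exists_ne_map_eq_of_card_lt_of_maps_to hg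
    (fun i _ => mem_image_of_mem g (mem_univ i))
  have := hindep i hi j hj hij
  simp [cubeSet_pointCube, hgij] at this

end LowerBound

lemma card_filter_div_eq_le {m b : ℕ} (hb : 0 < b) (q : ℕ) :
    #{i : Fin m | (i : ℕ) / b = q} ≤ b := by
  have h_inj : Set.InjOn (fun i : Fin m => (i : ℕ) % b)
      ({i : Fin m | (i : ℕ) / b = q} : Finset (Fin m)) := by
    intro i hi j hj hij
    rw [mem_coe, mem_filter] at hi hj
    exact Fin.ext (by rw [← Nat.div_add_mod i b, ← Nat.div_add_mod j b, hi.2, hj.2]; simp_all)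
  simpa using card_le_card_of_injOn _ (fun i _ => mem_range.mpr (Nat.mod_lt _ hb)) h_inj

/-- The `i`-th point is the `⌊i / (k - 1)⌋`-th of `2^d - 1` fixed distinct points; the junk
`else` branch is never taken when `m ≤ (2^d - 1)(k - 1)`. -/
noncomputable def blockPoints (d k m : ℕ) (i : Fin m) : Fin d → Bool :=
  if h : (i : ℕ) / (k - 1) < 2 ^ d - 1 then
    (Fintype.equivFinOfCardEq (by simp) : (Fin d → Bool) ≃ Fin (2 ^ d)).symm
      ⟨(i : ℕ) / (k - 1), h.trans_le (Nat.sub_le _ _)⟩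
  else fun _ => false

theorem not_cubesHaveClique_or_cubesHaveIndep_blockPoints {k m : ℕ} (hk : 1 ≤ k)
    (hm : m ≤ (2 ^ d - 1) * (k - 1)) :
    ¬ (cubesHaveClique (pointCube ∘ blockPoints d k m) k ∨
      cubesHaveIndep (pointCube ∘ blockPoints d k m) (2 ^ d)) := by
  set e : (Fin d → Bool) ≃ Fin (2 ^ d) := Fintype.equivFinOfCardEq (by simp)
  have h_index_lt : ∀ i : Fin m, (i : ℕ) / (k - 1) < 2 ^ d - 1 ∧ 0 < k - 1 := by
    intro i
    have hpos : 0 < k - 1 := Nat.pos_of_ne_zero fun h0 => by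
      have := i.isLt; simp [h0] at hm; omega
    exact ⟨(Nat.div_lt_iff_lt_mul hpos).mpr (by have := i.isLt; omega), hpos⟩
  have h_index : ∀ i : Fin m, (e (blockPoints d k m i) : ℕ) = (i : ℕ) / (k - 1) := by
    intro i
    simp [blockPoints, (h_index_lt i).1, e]
  rintro (h | h)
  · refine not_cubesHaveClique_pointCube _ hk (fun p => ?_) h
    rcases isEmpty_or_nonempty (Fin m) with _ | ⟨⟨i₀⟩⟩
    · simp only [univ_eq_empty, filter_empty, card_empty]
      exact hk
    have h_fiber : ({i | blockPoints d k m i = p} : Finset (Fin m)) ⊆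
        ({i : Fin m | (i : ℕ) / (k - 1) = e p} : Finset (Fin m)) :=
      monotone_filter_right _ fun i _ hi => by rw [← h_index, hi]
    have := (card_le_card h_fiber).trans (card_filter_div_eq_le (h_index_lt i₀).2 _)
    omega
  · refine not_cubesHaveIndep_pointCube _ ?_ h
    have h_avoid :
        univ.image (blockPoints d k m) ⊆ univ.erase (e.symm ⟨2 ^ d - 1, by simp⟩) := by
      intro p hp
      obtain ⟨i, -, rfl⟩ := mem_image.mp hp
      refine mem_erase.mpr ⟨fun hi => ?_, mem_univ _⟩
      have := h_index i
      rw [hi, Equiv.apply_symm_apply] at this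
      exact (h_index_lt i).1.ne this.symm
    calc #(univ.image (blockPoints d k m)) ≤ 2 ^ d - 1 := by simpa using card_le_card h_avoid
      _ < 2 ^ d := Nat.sub_lt (by positivity) one_pos

theorem Rd_two_pow {k : ℕ} (hk : 1 ≤ k) : Rd d k (2 ^ d) = (2 ^ d - 1) * (k - 1) + 1 := by
  have h_mem : (2 ^ d - 1) * (k - 1) + 1 ∈ {n : ℕ | ∀ A : Fin n → (Fin d → Option Bool),
      cubesHaveClique A k ∨ cubesHaveIndep A (2 ^ d)} :=
    fun A => cubesHaveClique_or_cubesHaveIndep A (Nat.lt_succ_self _)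
  refine le_antisymm (Nat.sInf_le h_mem) (le_csInf ⟨_, h_mem⟩ fun m hm => ?_)
  by_contra! hlt
  exact not_cubesHaveClique_or_cubesHaveIndep_blockPoints hk (by omega) (hm _)

/-- `R_2(k,4) = 3(k-1)+1`. -/
theorem Rd_two_k_four {k : ℕ} (hk : 1 ≤ k) : Rd 2 k 4 = 3 * (k - 1) + 1 :=
  Rd_two_pow (d := 2) hk
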